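/- For ℓ ∈ {logistic, exponential}, gradient descent w_{j+1} = w_j − η_j ∇R(w_j) from w_0 = 0 with step sizes η_j ≤ 1 satisfies, for every t ≥ 1: R(w_t) − inf_w R(w) ≤ exp(|v̄|)/t + (|v̄|² + ln(t)²/γ²)/(2 Σ_{j<t} η_j). -/

import Mathlib

open scoped RealInnerProductSpace
open Finset Set

/-!
Both losses are self-bounded: `0 ≤ ℓ' ≤ ℓ` and `0 ≤ ℓ'' ≤ ℓ`. Along a segment `u + sΔ` the risk
therefore has curvature at most `‖Δ‖²` times its value, which by convexity is at most the larger
endpoint value. While the risk is at most `1` this yields the descent inequality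
`R(w_{j+1}) + η_j/2 ‖∇R(w_j)‖² ≤ R(w_j)`, which in turn keeps the risk at most `1`. The classical
analysis of gradient descent on a convex function then bounds `(∑ η_j) (R(w_t) - R(z))` by
`‖z‖²/2` for every comparator `z`. For `z = v̄ + (ln t/γ) ū` the margin makes the loss of every
separable example at most `exp ‖v̄‖ / t`, the other losses are those of `v̄`, and
`‖z‖² = ‖v̄‖² + ln(t)²/γ²`.
-/

lemma convexOn_univ_of_hasDerivAt2_nonneg {f f' f'' : ℝ → ℝ}
    (hf : ∀ x, HasDerivAt f (f' x) x) (hf' : ∀ x, HasDerivAt f' (f'' x) x)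
    (hf'' : ∀ x, 0 ≤ f'' x) : ConvexOn ℝ univ f :=
  convexOn_of_hasDerivWithinAt2_nonneg convex_univ
    (fun x _ => (hf x).continuousAt.continuousWithinAt)
    (fun x _ => (hf x).hasDerivWithinAt) (fun x _ => (hf' x).hasDerivWithinAt)
    (fun x _ => hf'' x)

lemma le_add_add_half_of_deriv2_le {φ φ' φ'' : ℝ → ℝ} {M : ℝ}
    (hφ : ∀ s, HasDerivAt φ (φ' s) s) (hφ' : ∀ s, HasDerivAt φ' (φ'' s) s)
    (hM : ∀ s ∈ Icc (0 : ℝ) 1, φ'' s ≤ M) : φ 1 ≤ φ 0 + φ' 0 + M / 2 := by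
  -- `s ↦ φ s - M s² / 2` is concave on `[0, 1]`, so it lies below its tangent at `0`.
  set ψ : ℝ → ℝ := fun s => φ s - M * s ^ 2 / 2
  have hψ : ∀ s, HasDerivAt ψ (φ' s - M * s) s := fun s =>
    ((hφ s).sub (((hasDerivAt_pow 2 s).const_mul M).div_const 2)).congr_deriv (by ring)
  have hψ' : ∀ s, HasDerivAt (fun s => φ' s - M * s) (φ'' s - M) s := fun s =>
    ((hφ' s).sub ((hasDerivAt_id s).const_mul M)).congr_deriv (by simp)
  have hψ_concave : ConcaveOn ℝ (Icc 0 1) ψ := by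
    refine concaveOn_of_hasDerivWithinAt2_nonpos (convex_Icc 0 1)
      (fun s _ => (hψ s).continuousAt.continuousWithinAt)
      (fun s _ => (hψ s).hasDerivWithinAt) (fun s _ => (hψ' s).hasDerivWithinAt) fun s hs => ?_
    rw [interior_Icc] at hs
    linarith [hM s (Ioo_subset_Icc_self hs)]
  have := hψ_concave.slope_le_of_hasDerivAt (left_mem_Icc.2 zero_le_one)
    (right_mem_Icc.2 zero_le_one) zero_lt_one (hψ 0)
  simp only [slope_def_field, ψ] at this
  linarith

structure SelfBoundedLoss (ℓ ℓ' ℓ'' : ℝ → ℝ) : Prop where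
  hasDerivAt : ∀ z, HasDerivAt ℓ (ℓ' z) z
  hasDerivAt_deriv : ∀ z, HasDerivAt ℓ' (ℓ'' z) z
  deriv_nonneg : ∀ z, 0 ≤ ℓ' z
  deriv_le : ∀ z, ℓ' z ≤ ℓ z
  deriv2_nonneg : ∀ z, 0 ≤ ℓ'' z
  deriv2_le : ∀ z, ℓ'' z ≤ ℓ z

namespace SelfBoundedLoss

variable {ℓ ℓ' ℓ'' : ℝ → ℝ}

lemma nonneg (hℓ : SelfBoundedLoss ℓ ℓ' ℓ'') (z : ℝ) : 0 ≤ ℓ z :=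
  (hℓ.deriv_nonneg z).trans (hℓ.deriv_le z)

lemma convexOn (hℓ : SelfBoundedLoss ℓ ℓ' ℓ'') : ConvexOn ℝ univ ℓ :=
  convexOn_univ_of_hasDerivAt2_nonneg hℓ.hasDerivAt hℓ.hasDerivAt_deriv hℓ.deriv2_nonneg

lemma add_deriv_mul_sub_le (hℓ : SelfBoundedLoss ℓ ℓ' ℓ'') (x y : ℝ) :
    ℓ x + ℓ' x * (y - x) ≤ ℓ y := by
  rcases lt_trichotomy x y with hxy | rfl | hxy
  · have := hℓ.convexOn.le_slope_of_hasDerivAt (mem_univ x) (mem_univ y) hxy (hℓ.hasDerivAt x)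
    rw [slope_def_field, le_div_iff₀ (sub_pos.2 hxy)] at this
    linarith
  · simp
  · have := hℓ.convexOn.slope_le_of_hasDerivAt (mem_univ y) (mem_univ x) hxy (hℓ.hasDerivAt x)
    rw [slope_def_field, div_le_iff₀ (sub_pos.2 hxy)] at this
    linarith

lemma sum_le_sum_add_sum_add_max (hℓ : SelfBoundedLoss ℓ ℓ' ℓ'') {ι : Type*} (s : Finset ι)
    (x y : ι → ℝ) {M : ℝ} (hM : 0 ≤ M) (hy : ∀ i ∈ s, y i ^ 2 ≤ M) :
    ∑ i ∈ s, ℓ (x i + y i) ≤ ∑ i ∈ s, ℓ (x i) + ∑ i ∈ s, ℓ' (x i) * y i +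
      M * max (∑ i ∈ s, ℓ (x i)) (∑ i ∈ s, ℓ (x i + y i)) / 2 := by
  set φ : ℝ → ℝ := fun r => ∑ i ∈ s, ℓ (x i + r * y i)
  have hline : ∀ i r, HasDerivAt (fun r => x i + r * y i) (y i) r := fun i r => by
    simpa using (hasDerivAt_mul_const (y i)).const_add (x i)
  have hφ : ∀ r, HasDerivAt φ (∑ i ∈ s, ℓ' (x i + r * y i) * y i) r := fun r =>
    HasDerivAt.fun_sum fun i _ => (hℓ.hasDerivAt _).comp r (hline i r)
  have hφ' : ∀ r, HasDerivAt (fun r => ∑ i ∈ s, ℓ' (x i + r * y i) * y i)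
      (∑ i ∈ s, ℓ'' (x i + r * y i) * y i * y i) r := fun r =>
    HasDerivAt.fun_sum fun i _ => ((hℓ.hasDerivAt_deriv _).comp r (hline i r)).mul_const _
  have hφ_convex : ConvexOn ℝ univ φ :=
    convexOn_univ_of_hasDerivAt2_nonneg hφ hφ' fun r =>
      sum_nonneg fun i _ => by nlinarith [hℓ.deriv2_nonneg (x i + r * y i), sq_nonneg (y i)]
  have hφ_max : ∀ r ∈ Icc (0 : ℝ) 1, φ r ≤ max (φ 0) (φ 1) := fun r hr =>
    hφ_convex.le_on_segment (mem_univ 0) (mem_univ 1) (by rwa [segment_eq_Icc zero_le_one])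
  have := le_add_add_half_of_deriv2_le hφ hφ' fun r hr => calc
    ∑ i ∈ s, ℓ'' (x i + r * y i) * y i * y i ≤ ∑ i ∈ s, M * ℓ (x i + r * y i) :=
      sum_le_sum fun i hi => by
        nlinarith [hℓ.deriv2_le (x i + r * y i), hℓ.deriv2_nonneg (x i + r * y i),
          hℓ.nonneg (x i + r * y i), hy i hi, sq_nonneg (y i)]
    _ = M * φ r := (mul_sum ..).symm
    _ ≤ M * max (φ 0) (φ 1) := mul_le_mul_of_nonneg_left (hφ_max r hr) hM
  simpa [φ] using this

end SelfBoundedLoss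

lemma selfBoundedLoss_exp : SelfBoundedLoss Real.exp Real.exp Real.exp :=
  ⟨Real.hasDerivAt_exp, Real.hasDerivAt_exp, fun z => (Real.exp_pos z).le, fun _ => le_rfl,
    fun z => (Real.exp_pos z).le, fun _ => le_rfl⟩

lemma selfBoundedLoss_logistic :
    SelfBoundedLoss (fun z => Real.log (1 + Real.exp z))
      (fun z => Real.exp z / (1 + Real.exp z)) (fun z => Real.exp z / (1 + Real.exp z) ^ 2) := by
  have hpos : ∀ z, 0 < 1 + Real.exp z := fun z => by positivity
  have hσ_le : ∀ z, Real.exp z / (1 + Real.exp z) ≤ Real.log (1 + Real.exp z) := fun z => by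
    convert Real.one_sub_inv_le_log_of_pos (hpos z) using 1
    field_simp
    ring
  refine ⟨fun z => ((Real.hasDerivAt_exp z).const_add 1).log (hpos z).ne', fun z => ?_,
    fun z => by positivity, hσ_le, fun z => by positivity, fun z => ?_⟩
  · exact ((Real.hasDerivAt_exp z).div ((Real.hasDerivAt_exp z).const_add 1)
      (hpos z).ne').congr_deriv (by ring)
  · refine le_trans ?_ (hσ_le z)
    gcongr
    nlinarith [Real.exp_pos z]

lemma log_one_add_exp_le_exp (z : ℝ) : Real.log (1 + Real.exp z) ≤ Real.exp z := by
  linarith [Real.log_le_sub_one_of_pos (by positivity : 0 < 1 + Real.exp z)]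

section GradientDescent

variable {E : Type*} [NormedAddCommGroup E] [InnerProductSpace ℝ E] {f : E → ℝ} {g : E → E}

lemma norm_sub_smul_sub_sq_le (hconv : ∀ u v, f u + ⟪g u, v - u⟫ ≤ f v) {u : E} {η : ℝ}
    (hη : 0 ≤ η) (hdesc : f (u - η • g u) + η / 2 * ‖g u‖ ^ 2 ≤ f u) (z : E) :
    ‖u - η • g u - z‖ ^ 2 ≤ ‖u - z‖ ^ 2 - 2 * η * (f (u - η • g u) - f z) := by
  have hexpand : ‖u - η • g u - z‖ ^ 2 =
      ‖u - z‖ ^ 2 + 2 * η * ⟪g u, z - u⟫ + η ^ 2 * ‖g u‖ ^ 2 := by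
    rw [sub_right_comm, norm_sub_sq_real, real_inner_smul_right, norm_smul,
      Real.norm_of_nonneg hη, mul_pow, ← neg_sub z u, inner_neg_left, real_inner_comm]
    ring
  rw [hexpand]
  nlinarith [mul_le_mul_of_nonneg_left (hconv u z) hη]

theorem sum_mul_sub_le_of_descent (hconv : ∀ u v, f u + ⟪g u, v - u⟫ ≤ f v) {η : ℕ → ℝ}
    (hη : ∀ j, 0 ≤ η j) {w : ℕ → E} (hstep : ∀ j, w (j + 1) = w j - η j • g (w j))
    (hdesc : ∀ j, f (w (j + 1)) + η j / 2 * ‖g (w j)‖ ^ 2 ≤ f (w j)) (z : E) (t : ℕ) :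
    (∑ j ∈ range t, η j) * (f (w t) - f z) ≤ ‖w 0 - z‖ ^ 2 / 2 := by
  have hanti : Antitone (f ∘ w) := antitone_nat_of_succ_le fun j => by
    show f (w (j + 1)) ≤ f (w j)
    nlinarith [hdesc j, hη j, sq_nonneg ‖g (w j)‖]
  have htelescope : ∀ m, ‖w m - z‖ ^ 2 ≤
      ‖w 0 - z‖ ^ 2 - 2 * ∑ j ∈ range m, η j * (f (w (j + 1)) - f z) := by
    intro m
    induction m with
    | zero => simp
    | succ k ih =>
      have := norm_sub_smul_sub_sq_le hconv (hη k) (hstep k ▸ hdesc k) z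
      rw [← hstep] at this
      rw [sum_range_succ]
      linarith
  have hmono : (∑ j ∈ range t, η j) * (f (w t) - f z) ≤
      ∑ j ∈ range t, η j * (f (w (j + 1)) - f z) := by
    rw [sum_mul]
    exact sum_le_sum fun j hj => mul_le_mul_of_nonneg_left
      (sub_le_sub_right (hanti (mem_range.1 hj)) _) (hη j)
  nlinarith [htelescope t, sq_nonneg ‖w t - z‖]

end GradientDescent

lemma add_half_mul_le_of_le_max {a b G η : ℝ} (hη₀ : 0 ≤ η) (hη₁ : η ≤ 1) (ha₀ : 0 ≤ a)
    (ha₁ : a ≤ 1) (hG₀ : 0 ≤ G) (hG₁ : G ≤ 1) (hb : b ≤ a - η * G + η ^ 2 * G * max a b / 2) :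
    b + η / 2 * G ≤ a := by
  have hηG : η ^ 2 * G ≤ η * G := by nlinarith [mul_nonneg hη₀ hG₀]
  -- the case `a < b` is impossible: it forces `b ≤ 2`, and then `η² G b / 2 ≤ η G`
  have hba : b ≤ a := by
    by_contra! hab
    rw [max_eq_right hab.le] at hb
    have hb₂ : b ≤ 2 := by nlinarith [mul_nonneg (ha₀.trans hab.le) (sub_nonneg.2 (hηG.trans
      (by nlinarith : η * G ≤ 1)))]
    nlinarith [mul_le_mul_of_nonneg_left hb₂ (mul_nonneg (mul_nonneg hη₀ hη₀) hG₀)]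
  rw [max_eq_left hba] at hb
  nlinarith [mul_le_mul_of_nonneg_left ha₁ (mul_nonneg (mul_nonneg hη₀ hη₀) hG₀)]

section EmpiricalRisk

variable {E : Type*} [NormedAddCommGroup E] [InnerProductSpace ℝ E] {ι : Type*} [Fintype ι]

noncomputable def empiricalRisk (ℓ : ℝ → ℝ) (A : ι → E) (w : E) : ℝ :=
  (Fintype.card ι : ℝ)⁻¹ * ∑ i, ℓ ⟪A i, w⟫

noncomputable def riskGradient (ℓ' : ℝ → ℝ) (A : ι → E) (w : E) : E :=
  (Fintype.card ι : ℝ)⁻¹ • ∑ i, ℓ' ⟪A i, w⟫ • A i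

variable {ℓ ℓ' ℓ'' : ℝ → ℝ} {A : ι → E}

lemma inner_riskGradient (u v : E) :
    ⟪riskGradient ℓ' A u, v⟫ = (Fintype.card ι : ℝ)⁻¹ * ∑ i, ℓ' ⟪A i, u⟫ * ⟪A i, v⟫ := by
  simp only [riskGradient, real_inner_smul_left, sum_inner]

lemma hasGradientAt_empiricalRisk [CompleteSpace E] (hℓ : ∀ z, HasDerivAt ℓ (ℓ' z) z) (u : E) :
    HasGradientAt (empiricalRisk ℓ A) (riskGradient ℓ' A u) u := by
  rw [hasGradientAt_iff_hasFDerivAt]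
  have hterm : ∀ i, HasFDerivAt (fun w => ℓ ⟪A i, w⟫) (ℓ' ⟪A i, u⟫ • innerSL ℝ (A i)) u :=
    fun i => (hℓ _).comp_hasFDerivAt u (innerSL ℝ (A i)).hasFDerivAt
  refine ((HasFDerivAt.fun_sum fun i _ => hterm i).const_mul _).congr_fderiv ?_
  ext v
  simp [inner_riskGradient, mul_sum]

lemma empiricalRisk_nonneg (hℓ : SelfBoundedLoss ℓ ℓ' ℓ'') (u : E) : 0 ≤ empiricalRisk ℓ A u :=
  mul_nonneg (by positivity) (sum_nonneg fun i _ => hℓ.nonneg _)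

lemma empiricalRisk_zero_le (hℓ₀ : 0 ≤ ℓ 0) : empiricalRisk ℓ A 0 ≤ ℓ 0 := by
  rcases isEmpty_or_nonempty ι with _ | _
  · simpa [empiricalRisk] using hℓ₀
  · simp [empiricalRisk]

lemma empiricalRisk_add_inner_le (hℓ : SelfBoundedLoss ℓ ℓ' ℓ'') (u v : E) :
    empiricalRisk ℓ A u + ⟪riskGradient ℓ' A u, v - u⟫ ≤ empiricalRisk ℓ A v := by
  rw [empiricalRisk, empiricalRisk, inner_riskGradient, ← mul_add, ← sum_add_distrib]
  gcongr with i
  rw [inner_sub_right]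
  exact hℓ.add_deriv_mul_sub_le _ _

lemma norm_riskGradient_le (hℓ : SelfBoundedLoss ℓ ℓ' ℓ'') (hA : ∀ i, ‖A i‖ ≤ 1) (u : E) :
    ‖riskGradient ℓ' A u‖ ≤ empiricalRisk ℓ A u := by
  rw [riskGradient, empiricalRisk, norm_smul, Real.norm_of_nonneg (by positivity)]
  gcongr
  refine (norm_sum_le _ _).trans (sum_le_sum fun i _ => ?_)
  rw [norm_smul, Real.norm_of_nonneg (hℓ.deriv_nonneg _)]
  nlinarith [hℓ.deriv_nonneg ⟪A i, u⟫, hℓ.deriv_le ⟪A i, u⟫, hA i, norm_nonneg (A i)]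

lemma empiricalRisk_add_le (hℓ : SelfBoundedLoss ℓ ℓ' ℓ'') (hA : ∀ i, ‖A i‖ ≤ 1) (u Δ : E) :
    empiricalRisk ℓ A (u + Δ) ≤ empiricalRisk ℓ A u + ⟪riskGradient ℓ' A u, Δ⟫ +
      ‖Δ‖ ^ 2 * max (empiricalRisk ℓ A u) (empiricalRisk ℓ A (u + Δ)) / 2 := by
  have hΔ : ∀ i ∈ Finset.univ, ⟪A i, Δ⟫ ^ 2 ≤ ‖Δ‖ ^ 2 := fun i _ => by
    rw [← sq_abs]
    gcongr
    exact (abs_real_inner_le_norm _ _).trans (by nlinarith [hA i, norm_nonneg Δ])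
  have := mul_le_mul_of_nonneg_left (hℓ.sum_le_sum_add_sum_add_max Finset.univ
    (fun i => ⟪A i, u⟫) (fun i => ⟪A i, Δ⟫) (sq_nonneg _) hΔ)
    (by positivity : (0 : ℝ) ≤ (Fintype.card ι : ℝ)⁻¹)
  simp only [empiricalRisk, inner_riskGradient, inner_add_right]
  rw [mul_add, mul_add, ← mul_div_assoc, mul_left_comm, mul_max_of_nonneg _ _ (by positivity)]
    at this
  exact this

lemma empiricalRisk_sub_smul_add_le (hℓ : SelfBoundedLoss ℓ ℓ' ℓ'') (hA : ∀ i, ‖A i‖ ≤ 1)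
    {u : E} (hu : empiricalRisk ℓ A u ≤ 1) {η : ℝ} (hη₀ : 0 ≤ η) (hη₁ : η ≤ 1) :
    empiricalRisk ℓ A (u - η • riskGradient ℓ' A u) + η / 2 * ‖riskGradient ℓ' A u‖ ^ 2 ≤
      empiricalRisk ℓ A u := by
  set g := riskGradient ℓ' A u
  have hsmooth := empiricalRisk_add_le hℓ hA u (-(η • g))
  rw [← sub_eq_add_neg, inner_neg_right, real_inner_smul_right, real_inner_self_eq_norm_sq,
    norm_neg, norm_smul, Real.norm_of_nonneg hη₀, mul_pow] at hsmooth
  have hg := norm_riskGradient_le hℓ hA u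
  refine add_half_mul_le_of_le_max hη₀ hη₁ (empiricalRisk_nonneg hℓ u) hu (sq_nonneg _)
    (by nlinarith [norm_nonneg g]) ?_
  linarith

lemma empiricalRisk_gd_descent (hℓ : SelfBoundedLoss ℓ ℓ' ℓ'') (hA : ∀ i, ‖A i‖ ≤ 1)
    {η : ℕ → ℝ} (hη : ∀ j, 0 ≤ η j ∧ η j ≤ 1) {w : ℕ → E} (hw₀ : empiricalRisk ℓ A (w 0) ≤ 1)
    (hstep : ∀ j, w (j + 1) = w j - η j • riskGradient ℓ' A (w j)) (j : ℕ) :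
    empiricalRisk ℓ A (w (j + 1)) + η j / 2 * ‖riskGradient ℓ' A (w j)‖ ^ 2 ≤
      empiricalRisk ℓ A (w j) := by
  have hle_one : ∀ j, empiricalRisk ℓ A (w j) ≤ 1 := by
    intro j
    induction j with
    | zero => exact hw₀
    | succ k ih =>
      have := empiricalRisk_sub_smul_add_le hℓ hA ih (hη k).1 (hη k).2
      rw [← hstep] at this
      nlinarith [(hη k).1]
  rw [hstep]
  exact empiricalRisk_sub_smul_add_le hℓ hA (hle_one j) (hη j).1 (hη j).2

lemma empiricalRisk_add_smul_le [DecidableEq ι] (hℓ : ∀ z, ℓ z ≤ Real.exp z)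
    (hA : ∀ i, ‖A i‖ ≤ 1) (C : Finset ι) (v u : E) {γ r : ℝ} (hr : 0 ≤ r)
    (hmargin : ∀ i ∈ C, ⟪A i, u⟫ ≤ -γ) (hperp : ∀ i ∉ C, ⟪A i, u⟫ = 0) :
    empiricalRisk ℓ A (v + r • u) ≤
      (Fintype.card ι : ℝ)⁻¹ * ∑ i ∈ Cᶜ, ℓ ⟪A i, v⟫ + Real.exp (‖v‖ - r * γ) := by
  have hC : ∀ i ∈ C, ℓ ⟪A i, v + r • u⟫ ≤ Real.exp (‖v‖ - r * γ) := fun i hi => by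
    refine (hℓ _).trans (Real.exp_le_exp.2 ?_)
    rw [inner_add_right, real_inner_smul_right]
    have hv : ⟪A i, v⟫ ≤ ‖v‖ :=
      (real_inner_le_norm _ _).trans (by nlinarith [hA i, norm_nonneg v])
    nlinarith [mul_le_mul_of_nonneg_left (hmargin i hi) hr]
  have hCc : ∀ i ∈ Cᶜ, ℓ ⟪A i, v + r • u⟫ = ℓ ⟪A i, v⟫ := fun i hi => by
    rw [inner_add_right, real_inner_smul_right, hperp i (mem_compl.1 hi), mul_zero, add_zero]
  have hcard : (Fintype.card ι : ℝ)⁻¹ * C.card ≤ 1 := by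
    rcases (Nat.cast_nonneg (Fintype.card ι) : (0 : ℝ) ≤ _).eq_or_lt with h | h
    · simp [← h]
    · rw [inv_mul_le_one₀ h]
      exact_mod_cast C.card_le_univ
  rw [empiricalRisk, ← sum_add_sum_compl C, sum_congr rfl hCc, mul_add, add_comm]
  gcongr
  calc (Fintype.card ι : ℝ)⁻¹ * ∑ i ∈ C, ℓ ⟪A i, v + r • u⟫
      ≤ (Fintype.card ι : ℝ)⁻¹ * (C.card * Real.exp (‖v‖ - r * γ)) := by
        gcongr
        simpa using sum_le_sum hC
    _ ≤ Real.exp (‖v‖ - r * γ) := by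
        rw [← mul_assoc]
        exact mul_le_of_le_one_left (Real.exp_pos _).le hcard

end EmpiricalRisk

theorem gd_risk_convergence_general {n d : ℕ}
    (A : Fin n → EuclideanSpace ℝ (Fin d)) (hA : ∀ i, ‖A i‖ ≤ 1)
    (ℓ : ℝ → ℝ)
    (hℓ : ℓ = (fun z => Real.log (1 + Real.exp z)) ∨ ℓ = Real.exp)
    (R : EuclideanSpace ℝ (Fin d) → ℝ)
    (hR : ∀ w, R w = (1 / (n : ℝ)) * ∑ i, ℓ ⟪A i, w⟫)
    (C : Finset (Fin n)) (vbar ubar : EuclideanSpace ℝ (Fin d)) (γ : ℝ) (hγ : 0 < γ)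
    (hunorm : ‖ubar‖ = 1) (horth : ⟪vbar, ubar⟫ = 0)
    (hmargin : ∀ i ∈ C, ⟪A i, ubar⟫ ≤ -γ) (hperp : ∀ i ∉ C, ⟪A i, ubar⟫ = 0)
    (hinf : (⨅ w : EuclideanSpace ℝ (Fin d), R w) = (1 / (n : ℝ)) * ∑ i ∈ Cᶜ, ℓ ⟪A i, vbar⟫)
    (η : ℕ → ℝ) (hη : ∀ j, 0 < η j ∧ η j ≤ 1)
    (w : ℕ → EuclideanSpace ℝ (Fin d)) (hw0 : w 0 = 0)
    (hiter : ∀ j, w (j + 1) = w j - η j • gradient R (w j))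
    (t : ℕ) (ht : 1 ≤ t) :
    R (w t) - (⨅ w' : EuclideanSpace ℝ (Fin d), R w') ≤
      Real.exp ‖vbar‖ / t +
        (‖vbar‖ ^ 2 + Real.log t ^ 2 / γ ^ 2) / (2 * ∑ j ∈ Finset.range t, η j) := by
  obtain ⟨ℓ', ℓ'', hL, hℓ_exp⟩ :
      ∃ ℓ' ℓ'', SelfBoundedLoss ℓ ℓ' ℓ'' ∧ ∀ z, ℓ z ≤ Real.exp z := by
    rcases hℓ with rfl | rfl
    · exact ⟨_, _, selfBoundedLoss_logistic, log_one_add_exp_le_exp⟩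
    · exact ⟨_, _, selfBoundedLoss_exp, fun _ => le_rfl⟩
  have hcard : (Fintype.card (Fin n) : ℝ)⁻¹ = 1 / n := by rw [Fintype.card_fin, one_div]
  obtain rfl : R = empiricalRisk ℓ A := funext fun u => by rw [hR, empiricalRisk, hcard]
  have hstep : ∀ j, w (j + 1) = w j - η j • riskGradient ℓ' A (w j) := fun j => by
    rw [hiter, (hasGradientAt_empiricalRisk hL.hasDerivAt (w j)).gradient]
  have hw₀ : empiricalRisk ℓ A (w 0) ≤ 1 := by
    rw [hw0]
    exact (empiricalRisk_zero_le (hL.nonneg 0)).trans (by simpa using hℓ_exp 0)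
  set r := Real.log t / γ
  have hr : 0 ≤ r := div_nonneg (Real.log_nonneg (by exact_mod_cast ht)) hγ.le
  set z := vbar + r • ubar
  have hgd := sum_mul_sub_le_of_descent (empiricalRisk_add_inner_le hL) (fun j => (hη j).1.le)
    hstep (empiricalRisk_gd_descent hL hA (fun j => ⟨(hη j).1.le, (hη j).2⟩) hw₀ hstep) z t
  have hnorm : ‖w 0 - z‖ ^ 2 = ‖vbar‖ ^ 2 + Real.log t ^ 2 / γ ^ 2 := by
    rw [hw0, zero_sub, norm_neg, norm_add_sq_real, real_inner_smul_right, horth, norm_smul,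
      Real.norm_of_nonneg hr, hunorm, mul_one, div_pow]
    ring
  have hS : 0 < ∑ j ∈ Finset.range t, η j :=
    Finset.sum_pos (fun j _ => (hη j).1) (Finset.nonempty_range_iff.2 (by omega))
  have hgap : empiricalRisk ℓ A (w t) - empiricalRisk ℓ A z ≤
      (‖vbar‖ ^ 2 + Real.log t ^ 2 / γ ^ 2) / (2 * ∑ j ∈ Finset.range t, η j) := by
    rw [le_div_iff₀ (by positivity)]
    linarith
  have hcomp := empiricalRisk_add_smul_le hℓ_exp hA C vbar ubar hr hmargin hperp
  rw [hcard, div_mul_cancel₀ _ hγ.ne', Real.exp_sub, Real.exp_log (by positivity)] at hcomp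
  rw [hinf]
  linarith

/-- Risk convergence of gradient descent for the logistic or exponential loss:
`R(w_t) − inf_w R(w) ≤ exp(|v̄|)/t + (|v̄|² + ln(t)²/γ²)/(2 Σ_{j<t} η_j)`. -/
theorem gd_risk_convergence {n d : ℕ} (hn : 0 < n)
    (A : Fin n → EuclideanSpace ℝ (Fin d)) (hA : ∀ i, ‖A i‖ ≤ 1)
    (ℓ : ℝ → ℝ)
    (hℓ : ℓ = (fun z => Real.log (1 + Real.exp z)) ∨ ℓ = Real.exp)
    (R : EuclideanSpace ℝ (Fin d) → ℝ)
    (hR : ∀ w, R w = (1 / (n : ℝ)) * ∑ i, ℓ ⟪A i, w⟫)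
    (C : Finset (Fin n)) (vbar ubar : EuclideanSpace ℝ (Fin d)) (γ : ℝ) (hγ : 0 < γ)
    (hunorm : ‖ubar‖ = 1) (horth : ⟪vbar, ubar⟫ = 0)
    (hmargin : ∀ i ∈ C, ⟪A i, ubar⟫ ≤ -γ) (hperp : ∀ i ∉ C, ⟪A i, ubar⟫ = 0)
    (hinf : (⨅ w : EuclideanSpace ℝ (Fin d), R w) = (1 / (n : ℝ)) * ∑ i ∈ Cᶜ, ℓ ⟪A i, vbar⟫)
    (η : ℕ → ℝ) (hη : ∀ j, 0 < η j ∧ η j ≤ 1)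
    (w : ℕ → EuclideanSpace ℝ (Fin d)) (hw0 : w 0 = 0)
    (hiter : ∀ j, w (j + 1) = w j - η j • gradient R (w j))
    (t : ℕ) (ht : 1 ≤ t) :
    R (w t) - (⨅ w' : EuclideanSpace ℝ (Fin d), R w') ≤
      Real.exp ‖vbar‖ / t +
        (‖vbar‖ ^ 2 + Real.log t ^ 2 / γ ^ 2) / (2 * ∑ j ∈ Finset.range t, η j) :=
  gd_risk_convergence_general A hA ℓ hℓ R hR C vbar ubar γ hγ hunorm horth hmargin hperp hinf η hη w
    hw0 hiter t ht
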